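/- arXiv:1611.07463 — 2 statements merged into one kernel-verified Lean document; each statement's English description precedes it below -/
import Mathlib

section
/- Let C ⊆ ℝ^n be a rational polyhedral cone and let D ⊆ C ∩ ((1/L)·ℤ)^n for some positive integer L. Then there exists a finite subset D' ⊆ D such that D + C = D' + C, where + denotes the Minkowski sum. -/
open scoped Pointwise

namespace SclPaper

def IsRationalPolyhedralCone {n : ℕ} (C : Set (Fin n → ℝ)) : Prop :=
  ∃ (m : ℕ) (f : Fin m → ((Fin n → ℝ) →ₗ[ℝ] ℝ)),
    (∀ i j, ∃ q : ℚ, f i (Pi.single j 1) = (q : ℝ)) ∧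
    C = {x | ∀ i, 0 ≤ f i x}

private lemma exists_minimal_aux {m : ℕ} (S : Set (Fin m → ℕ)) :
    ∀ (N : ℕ) (x : Fin m → ℕ), x ∈ S → ∑ i, x i ≤ N →
      ∃ y ∈ S, y ≤ x ∧ ∀ z ∈ S, z ≤ y → y = z := by
  intro N
  induction N with
  | zero =>
      intro x hx hsum
      refine ⟨x, hx, le_rfl, fun z hz hzx => ?_⟩
      funext i
      have h1 : x i = 0 := by
        have := Finset.sum_eq_zero_iff.mp (Nat.le_zero.mp hsum) i (Finset.mem_univ i)
        exact this
      have h2 := hzx i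
      rw [h1] at h2 ⊢
      exact (Nat.le_zero.mp h2).symm
  | succ N ih =>
      intro x hx hsum
      by_cases h : ∀ z ∈ S, z ≤ x → x = z
      · exact ⟨x, hx, le_rfl, h⟩
      · push_neg at h
        obtain ⟨z, hzS, hzx, hne⟩ := h
        have hne' : ∃ i, z i ≠ x i := by
          by_contra hc; push_neg at hc; exact hne (funext fun i => (hc i).symm)
        obtain ⟨i, hi⟩ := hne'
        have hlt : ∑ j, z j < ∑ j, x j :=
          Finset.sum_lt_sum (fun j _ => hzx j)
            ⟨i, Finset.mem_univ i, lt_of_le_of_ne (hzx i) hi⟩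
        obtain ⟨y, hy, hyz, hmin⟩ := ih z hzS (by omega)
        exact ⟨y, hy, le_trans hyz hzx, hmin⟩

/-- **Key Lemma.**  If `C ⊆ ℝⁿ` is a rational polyhedral cone and
`D ⊆ C ∩ ((1/L)·ℤ)ⁿ` for some positive integer `L`, then there is a finite subset
`D' ⊆ D` with `D + C = D' + C` (Minkowski sums). -/
theorem finite_generation_of_lattice_plus_cone {n L : ℕ} (hL : 0 < L)
    (C D : Set (Fin n → ℝ)) (hC : IsRationalPolyhedralCone C) (hDC : D ⊆ C)
    (hDlat : ∀ x ∈ D, ∀ j, ∃ z : ℤ, x j = (z : ℝ) / (L : ℝ)) :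
    ∃ D' ⊆ D, D'.Finite ∧ D + C = D' + C := by
  classical
  obtain ⟨m, f, hfq, hCeq⟩ := hC
  -- common denominator
  set M : ℕ := ∏ i : Fin m, ∏ j : Fin n, (Classical.choose (hfq i j)).den with hMdef
  have hMpos : 0 < M :=
    Finset.prod_pos fun i _ => Finset.prod_pos fun j _ => (Classical.choose (hfq i j)).pos
  have hint : ∀ i j, ∃ w : ℤ, (M : ℝ) * f i (Pi.single j 1) = (w : ℝ) := by
    intro i j
    set q := Classical.choose (hfq i j) with hqdef
    have hq : f i (Pi.single j 1) = (q : ℝ) := Classical.choose_spec (hfq i j)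
    have hdvd : q.den ∣ M := by
      refine Dvd.dvd.trans ?_ (Finset.dvd_prod_of_mem _ (Finset.mem_univ i))
      exact Finset.dvd_prod_of_mem _ (Finset.mem_univ j)
    obtain ⟨k, hk⟩ := hdvd
    refine ⟨(k : ℤ) * q.num, ?_⟩
    have hden : ((q.den : ℚ)) ≠ 0 := by exact_mod_cast q.den_nz
    have hdenR : ((q.den : ℝ)) ≠ 0 := Nat.cast_ne_zero.mpr q.den_nz
    rw [hq, Rat.cast_def, hk]
    push_cast
    field_simp
  -- the key map to ℕ^m
  set K : ℕ := L * M with hKdef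
  have hKpos : (0:ℝ) < (K : ℝ) := by positivity
  set φ : (Fin n → ℝ) → (Fin m → ℕ) := fun x i => ⌊(K : ℝ) * f i x⌋₊ with hφdef
  have hφval : ∀ x ∈ D, ∀ i, ((φ x i : ℕ) : ℝ) = (K : ℝ) * f i x := by
    intro x hx i
    have hxC : ∀ i, 0 ≤ f i x := by
      have := hDC hx
      rwa [hCeq] at this
    -- f i x as a sum
    have hsum : f i x = ∑ j, x j * f i (Pi.single j 1) := by
      have := LinearMap.pi_apply_eq_sum_univ (f i) x
      rw [this]
      refine Finset.sum_congr rfl fun j _ => ?_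
      congr 1
      congr 1
      funext k
      rw [Pi.single_apply]
      simp [eq_comm]
    have hw : ∃ w : ℤ, (K : ℝ) * f i x = (w : ℝ) := by
      choose w hwspec using hint i
      choose z hzspec using hDlat x hx
      refine ⟨∑ j, z j * w j, ?_⟩
      rw [hsum, Finset.mul_sum]
      push_cast
      refine Finset.sum_congr rfl fun j _ => ?_
      have hLne : (L : ℝ) ≠ 0 := by positivity
      rw [hzspec j]
      rw [hKdef]
      push_cast
      rw [← hwspec j]
      field_simp
    obtain ⟨w, hwval⟩ := hw
    have hwnn : (0:ℝ) ≤ (w : ℝ) := by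
      rw [← hwval]
      exact mul_nonneg hKpos.le (hxC i)
    have hwnn' : 0 ≤ w := by exact_mod_cast hwnn
    have : (K : ℝ) * f i x = ((w.toNat : ℕ) : ℝ) := by
      rw [hwval]; congr 1; exact_mod_cast (Int.toNat_of_nonneg hwnn').symm
    rw [hφdef]
    simp only
    rw [this, Nat.floor_natCast]
  -- order transfer
  have hφle : ∀ a ∈ D, ∀ b ∈ D, φ b ≤ φ a → ∀ i, f i b ≤ f i a := by
    intro a ha b hb hle i
    have h1 := hφval a ha i
    have h2 := hφval b hb i
    have h3 : ((φ b i : ℕ) : ℝ) ≤ ((φ a i : ℕ) : ℝ) := by exact_mod_cast hle i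
    rw [h1, h2] at h3
    exact le_of_mul_le_mul_left h3 hKpos
  -- minimal elements
  set S : Set (Fin m → ℕ) := φ '' D with hSdef
  set T : Set (Fin m → ℕ) := {y ∈ S | ∀ z ∈ S, z ≤ y → y = z} with hTdef
  have hanti : IsAntichain (· ≤ ·) T := by
    intro a ha b hb hab hle
    exact hab (hb.2 a ha.1 hle).symm
  have hpwo : T.IsPWO := by
    haveI : ∀ i : Fin m, IsWellOrder ℕ (· < ·) := fun _ => (inferInstance : IsWellOrder ℕ (· < ·))
    exact Set.isPWO_of_wellQuasiOrderedLE T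
  have hTfin : T.Finite :=
    hanti.finite_of_partiallyWellOrderedOn hpwo
  -- representatives
  set g : (Fin m → ℕ) → (Fin n → ℝ) := fun y =>
    if h : ∃ d ∈ D, φ d = y then h.choose else 0 with hgdef
  have hgspec : ∀ y ∈ T, g y ∈ D ∧ φ (g y) = y := by
    intro y hy
    obtain ⟨d, hd, hdy⟩ := hy.1
    have h : ∃ d ∈ D, φ d = y := ⟨d, hd, hdy⟩
    rw [hgdef]
    simp only [dif_pos h]
    exact ⟨h.choose_spec.1, h.choose_spec.2⟩
  refine ⟨g '' T, ?_, hTfin.image g, ?_⟩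
  · rintro _ ⟨y, hy, rfl⟩
    exact (hgspec y hy).1
  · apply Set.Subset.antisymm
    · rintro p ⟨a, ha, b, hb, rfl⟩
      obtain ⟨y, hyS, hyle, hymin⟩ :=
        exists_minimal_aux S (∑ i, φ a i) (φ a) ⟨a, ha, rfl⟩ le_rfl
      have hyT : y ∈ T := ⟨hyS, hymin⟩
      obtain ⟨hgD, hgφ⟩ := hgspec y hyT
      have hle : φ (g y) ≤ φ a := by rw [hgφ]; exact hyle
      have hfle := hφle a ha (g y) hgD hle
      refine ⟨g y, ⟨y, hyT, rfl⟩, (a - g y) + b, ?_, by ring⟩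
      rw [hCeq]
      intro i
      have hbC : 0 ≤ f i b := by rw [hCeq] at hb; exact hb i
      have : f i ((a - g y) + b) = f i a - f i (g y) + f i b := by
        simp [map_add, map_sub]
      rw [this]
      have := hfle i
      linarith
    · rintro p ⟨a, ha, b, hb, rfl⟩
      obtain ⟨y, hy, rfl⟩ := ha
      exact ⟨g y, (hgspec y hy).1, b, hb, rfl⟩

end SclPaper
end

section
/- Let C ⊆ ℝ^n be a rational polyhedral cone and let D ⊆ C ∩ ((1/L)·ℤ)^n for some positive integer L. Then conv(C + D) = conv(D) + C, this set is closed, and there is a finite subset D' ⊆ D with conv(C + D) = conv(D') + C; in particular conv(C + D) is a closed rational polyhedron. -/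
open scoped Pointwise
open Finset

namespace SclPaper

/-- A rational polyhedron in `ℝⁿ`: a finite intersection of affine half-spaces with rational
coefficients. -/
def IsRationalPolyhedron {n : ℕ} (S : Set (Fin n → ℝ)) : Prop :=
  ∃ (m : ℕ) (f : Fin m → ((Fin n → ℝ) →ₗ[ℝ] ℝ)) (b : Fin m → ℚ),
    (∀ i j, ∃ q : ℚ, f i (Pi.single j 1) = (q : ℝ)) ∧
    S = {x | ∀ i, (b i : ℝ) ≤ f i x}

/-- Rational H-polyhedron with concrete matrix data. -/
def QPoly {N : ℕ} (S : Set (Fin N → ℝ)) : Prop :=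
  ∃ (m : ℕ) (A : Fin m → Fin N → ℚ) (b : Fin m → ℚ),
    S = {x | ∀ i, (b i : ℝ) ≤ ∑ j, (A i j : ℝ) * x j}

theorem qpoly_of_fintype {N : ℕ} (ι : Type) [Fintype ι] (A : ι → Fin N → ℚ) (b : ι → ℚ) :
    QPoly {x : Fin N → ℝ | ∀ i, (b i : ℝ) ≤ ∑ j, (A i j : ℝ) * x j} := by
  classical
  obtain ⟨e⟩ : Nonempty (Fin (Fintype.card ι) ≃ ι) := ⟨(Fintype.equivFin ι).symm⟩
  refine ⟨Fintype.card ι, fun i => A (e i), fun i => b (e i), ?_⟩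
  ext x
  simp only [Set.mem_setOf_eq]
  exact ⟨fun h i => h (e i), fun h i => by simpa using h (e.symm i)⟩

private theorem fm_aux {bi bk si sk ci ck : ℝ} (hci : 0 < ci) (hck : ck < 0)
    (h : ci * bk - ck * bi ≤ ci * sk - ck * si) :
    (bi - si) / ci ≤ (bk - sk) / ck := by
  rw [div_le_iff₀ hci, div_mul_eq_mul_div, le_div_iff_of_neg hck]
  nlinarith

theorem QPoly.proj {N : ℕ} {S : Set (Fin (N + 1) → ℝ)} (h : QPoly S) :
    QPoly {x : Fin N → ℝ | ∃ t : ℝ, Fin.snoc x t ∈ S} := by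
  classical
  obtain ⟨m, A, b, rfl⟩ := h
  set c : Fin m → ℚ := fun i => A i (Fin.last N) with hc
  have hmem : ∀ (x : Fin N → ℝ) (t : ℝ),
      ((Fin.snoc x t : Fin (N+1) → ℝ) ∈
        {y : Fin (N+1) → ℝ | ∀ i, (b i : ℝ) ≤ ∑ j, (A i j : ℝ) * y j})
      ↔ ∀ i, (b i : ℝ) ≤ (∑ j, (A i (Fin.castSucc j) : ℝ) * x j) + (c i : ℝ) * t := by
    intro x t
    simp only [Set.mem_setOf_eq]
    refine forall_congr' fun i => ?_
    rw [Fin.sum_univ_castSucc]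
    simp [hc]
  set ι := {i : Fin m // c i = 0} ⊕ ({i : Fin m // 0 < c i} × {i : Fin m // c i < 0}) with hι
  set A' : ι → Fin N → ℚ := fun p => match p with
    | Sum.inl ⟨i, _⟩ => fun j => A i (Fin.castSucc j)
    | Sum.inr (⟨i, _⟩, ⟨k, _⟩) => fun j =>
        c i * A k (Fin.castSucc j) - c k * A i (Fin.castSucc j) with hA'
  set b' : ι → ℚ := fun p => match p with
    | Sum.inl ⟨i, _⟩ => b i
    | Sum.inr (⟨i, _⟩, ⟨k, _⟩) => c i * b k - c k * b i with hb'
  have key : {x : Fin N → ℝ | ∃ t : ℝ, Fin.snoc x t ∈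
        {y : Fin (N+1) → ℝ | ∀ i, (b i : ℝ) ≤ ∑ j, (A i j : ℝ) * y j}}
      = {x : Fin N → ℝ | ∀ p : ι, (b' p : ℝ) ≤ ∑ j, (A' p j : ℝ) * x j} := by
    ext x
    set s : Fin m → ℝ := fun i => ∑ j, (A i (Fin.castSucc j) : ℝ) * x j with hs
    have hsum : ∀ (i k : Fin m),
        (∑ j, ((c i * A k (Fin.castSucc j) - c k * A i (Fin.castSucc j) : ℚ) : ℝ) * x j)
          = (c i : ℝ) * s k - (c k : ℝ) * s i := by
      intro i k
      rw [hs]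
      push_cast
      rw [Finset.mul_sum, Finset.mul_sum, ← Finset.sum_sub_distrib]
      congr 1; ext j; ring
    constructor
    · rintro ⟨t, ht⟩
      rw [hmem] at ht
      rintro (⟨i, hi⟩ | ⟨⟨i, hi⟩, ⟨k, hk⟩⟩)
      · have := ht i
        simp only [hA', hb']
        rw [hi] at this
        simpa using this
      · have h1 := ht i
        have h2 := ht k
        simp only [hA', hb']
        rw [hsum i k]
        have hci : (0 : ℝ) < (c i : ℝ) := by exact_mod_cast hi
        have hck : ((c k : ℝ)) < 0 := by exact_mod_cast hk
        push_cast
        nlinarith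
    · intro hx
      have hz : ∀ i, c i = 0 → (b i : ℝ) ≤ s i := by
        intro i hi
        have := hx (Sum.inl ⟨i, hi⟩)
        simpa [hA', hb', hs] using this
      have hcross : ∀ i k, 0 < c i → c k < 0 →
          (c i : ℝ) * (b k : ℝ) - (c k : ℝ) * (b i : ℝ) ≤ (c i : ℝ) * s k - (c k : ℝ) * s i := by
        intro i k hi hk
        have := hx (Sum.inr (⟨i, hi⟩, ⟨k, hk⟩))
        simp only [hA', hb'] at this
        rw [hsum i k] at this
        push_cast at this
        exact this
      set l : Fin m → ℝ := fun i => ((b i : ℝ) - s i) / (c i : ℝ) with hl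
      set Lset : Finset (Fin m) := Finset.univ.filter (fun i => 0 < c i) with hL
      set Uset : Finset (Fin m) := Finset.univ.filter (fun i => c i < 0) with hU
      set t : ℝ := if hLn : Lset.Nonempty then Lset.sup' hLn l
        else if hUn : Uset.Nonempty then Uset.inf' hUn l else 0 with htdef
      have hlow : ∀ i, 0 < c i → l i ≤ t := by
        intro i hi
        have hmemL : i ∈ Lset := by simp [hL, hi]
        have hLn : Lset.Nonempty := ⟨i, hmemL⟩
        rw [htdef, dif_pos hLn]
        exact Finset.le_sup' l hmemL
      have hup : ∀ k, c k < 0 → t ≤ l k := by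
        intro k hk
        have hmemU : k ∈ Uset := by simp [hU, hk]
        have hUn : Uset.Nonempty := ⟨k, hmemU⟩
        rw [htdef]
        by_cases hLn : Lset.Nonempty
        · rw [dif_pos hLn]
          refine Finset.sup'_le hLn l fun i hiL => ?_
          have hi : 0 < c i := by simpa [hL] using hiL
          have hci : (0 : ℝ) < (c i : ℝ) := by exact_mod_cast hi
          have hck : ((c k : ℝ)) < 0 := by exact_mod_cast hk
          exact fm_aux hci hck (hcross i k hi hk)
        · rw [dif_neg hLn, dif_pos hUn]
          exact Finset.inf'_le l hmemU
      refine ⟨t, ?_⟩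
      rw [hmem]
      intro i
      rcases lt_trichotomy (c i) 0 with hneg | hzero | hpos
      · have hck : ((c i : ℝ)) < 0 := by exact_mod_cast hneg
        have h1 : t ≤ l i := hup i hneg
        have h2 : (b i : ℝ) - s i ≤ t * (c i : ℝ) := by
          rw [← le_div_iff_of_neg hck]; exact h1
        nlinarith
      · have : ((c i : ℝ)) = 0 := by exact_mod_cast hzero
        rw [this]
        simpa using hz i hzero
      · have hci : (0 : ℝ) < (c i : ℝ) := by exact_mod_cast hpos
        have h1 : l i ≤ t := hlow i hpos
        have h2 : (b i : ℝ) - s i ≤ t * (c i : ℝ) := by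
          rw [← div_le_iff₀ hci]; exact h1
        nlinarith
  rw [key]
  exact qpoly_of_fintype ι A' b'

theorem QPoly.projMulti {N k : ℕ} {S : Set (Fin (N + k) → ℝ)} (h : QPoly S) :
    QPoly {x : Fin N → ℝ | ∃ y : Fin k → ℝ, Fin.append x y ∈ S} := by
  induction k with
  | zero =>
      have : {x : Fin N → ℝ | ∃ y : Fin 0 → ℝ, Fin.append x y ∈ S} = S := by
        ext x
        constructor
        · rintro ⟨y, hy⟩
          rwa [show y = Fin.elim0 from funext fun i => i.elim0, Fin.append_elim0] at hy
        · intro hx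
          exact ⟨Fin.elim0, by rwa [Fin.append_elim0]⟩
      rw [this]; exact h
  | succ k ih =>
      have h' : QPoly {z : Fin (N + k) → ℝ | ∃ t : ℝ, Fin.snoc z t ∈ S} :=
        QPoly.proj (S := S) h
      have h'' := ih h'
      have heq : {x : Fin N → ℝ | ∃ y : Fin (k+1) → ℝ, Fin.append x y ∈ S}
          = {x : Fin N → ℝ | ∃ y : Fin k → ℝ,
              Fin.append x y ∈ {z : Fin (N + k) → ℝ | ∃ t : ℝ, Fin.snoc z t ∈ S}} := by
        ext x
        constructor
        · rintro ⟨y', hy'⟩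
          refine ⟨Fin.init y', y' (Fin.last k), ?_⟩
          rwa [← Fin.append_snoc, Fin.snoc_init_self]
        · rintro ⟨y, t, hyt⟩
          exact ⟨Fin.snoc y t, by rwa [Fin.append_snoc]⟩
      rw [heq]; exact h''

theorem exists_finite_dominating {m : ℕ} (S : Set (Fin m → ℕ)) :
    ∃ T ⊆ S, T.Finite ∧ ∀ s ∈ S, ∃ t ∈ T, t ≤ s := by
  have hpwo : S.IsPWO := Set.isPWO_of_wellQuasiOrderedLE S
  set T : Set (Fin m → ℕ) := {a ∈ S | ∀ b ∈ S, b ≤ a → a ≤ b} with hT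
  have hTS : T ⊆ S := fun a ha => ha.1
  refine ⟨T, hTS, ?_, ?_⟩
  · have hanti : IsAntichain (· ≤ ·) T := by
      intro a ha b hb hab hle
      exact hab (le_antisymm hle (hb.2 a ha.1 hle))
    exact hanti.finite_of_partiallyWellOrderedOn (hpwo.mono hTS)
  · intro s hs
    have hwf : ({a ∈ S | a ≤ s}).IsWF := (hpwo.isWF).mono (fun a ha => ha.1)
    have hne : ({a ∈ S | a ≤ s}).Nonempty := ⟨s, hs, le_rfl⟩
    set a := hwf.min hne with ha
    have hamem := hwf.min_mem hne
    refine ⟨a, ⟨hamem.1, ?_⟩, hamem.2⟩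
    intro b hb hba
    by_contra hab
    exact hwf.not_lt_min hne ⟨hb, le_trans hba hamem.2⟩ (lt_of_le_of_ne hba (fun hh => hab (hh ▸ le_rfl)))
  
-- domination through a map
theorem exists_finite_dominating_map {α : Type*} {m : ℕ} (D : Set α) (φ : α → (Fin m → ℕ)) :
    ∃ T ⊆ D, T.Finite ∧ ∀ x ∈ D, ∃ t ∈ T, φ t ≤ φ x := by
  obtain ⟨T', hT'sub, hT'fin, hdom⟩ := exists_finite_dominating (φ '' D)
  have : Finite T' := hT'fin
  choose pre hpre hpre2 using fun (t : T') => hT'sub t.2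
  refine ⟨Set.range pre, ?_, Set.finite_range pre, ?_⟩
  · rintro _ ⟨t, rfl⟩; exact hpre t
  · intro x hx
    obtain ⟨t, ht, hle⟩ := hdom (φ x) ⟨x, hx, rfl⟩
    refine ⟨pre ⟨t, ht⟩, ⟨⟨t, ht⟩, rfl⟩, ?_⟩
    rw [hpre2 ⟨t, ht⟩]
    exact hle

theorem mem_convexHull_range_iff {k n : ℕ} (d : Fin k → Fin n → ℝ) (x : Fin n → ℝ) :
    x ∈ convexHull ℝ (Set.range d) ↔
      ∃ w : Fin k → ℝ, (∀ i, 0 ≤ w i) ∧ ∑ i, w i = 1 ∧ ∑ i, w i • d i = x := by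
  classical
  rw [convexHull_range_eq_exists_affineCombination]
  constructor
  · rintro ⟨s, w, hw0, hw1, rfl⟩
    set w' : Fin k → ℝ := fun i => if i ∈ s then w i else 0 with hw'
    have hsum : ∑ i ∈ s, w' i = ∑ i, w' i :=
      Finset.sum_subset (Finset.subset_univ s) (fun i _ hi => if_neg hi)
    have hsw : ∑ i ∈ s, w' i = ∑ i ∈ s, w i :=
      Finset.sum_congr rfl (fun i hi => if_pos hi)
    refine ⟨w', ?_, ?_, ?_⟩
    · intro i
      by_cases h : i ∈ s
      · simpa [hw', h] using hw0 i h
      · simp [hw', h]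
    · rw [← hsum, hsw, hw1]
    · rw [affineCombination_eq_centerMass hw1, Finset.centerMass_eq_of_sum_1 _ _ hw1]
      rw [← Finset.sum_subset (Finset.subset_univ s)
        (fun i _ hi => by simp [hw', if_neg hi])]
      exact Finset.sum_congr rfl (fun i hi => by simp [hw', if_pos hi])
  · rintro ⟨w, hw0, hw1, rfl⟩
    refine ⟨Finset.univ, w, fun i _ => hw0 i, hw1, ?_⟩
    rw [affineCombination_eq_centerMass hw1, Finset.centerMass_eq_of_sum_1 _ _ hw1]

private theorem row_algebra {n k : ℕ} (a : Fin n → ℝ) (e : Fin k → Fin n → ℝ)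
    (w : Fin k → ℝ) (z : Fin n → ℝ) :
    (∑ j, a j * z j) + ∑ l, (-(∑ j, a j * e l j)) * w l
      = ∑ j, a j * (z j - ∑ l, w l * e l j) := by
  have h1 : ∀ l, (-(∑ j, a j * e l j)) * w l = ∑ j, -(a j * e l j * w l) := by
    intro l
    rw [neg_mul, Finset.sum_mul, ← Finset.sum_neg_distrib]
  simp_rw [h1]
  rw [Finset.sum_comm, ← Finset.sum_add_distrib]
  refine Finset.sum_congr rfl fun j _ => ?_
  rw [mul_sub, Finset.mul_sum, sub_eq_add_neg, ← Finset.sum_neg_distrib]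
  congr 1
  exact Finset.sum_congr rfl fun l _ => by ring

theorem qpoly_hull_add_cone {n m k : ℕ} (F : Fin m → Fin n → ℚ) (δ : Fin k → Fin n → ℚ)
    (d : Fin k → Fin n → ℝ) (hd : ∀ l j, d l j = (δ l j : ℝ)) :
    QPoly (convexHull ℝ (Set.range d) +
      {x : Fin n → ℝ | ∀ i, 0 ≤ ∑ j, (F i j : ℝ) * x j}) := by
  classical
  set ι := (Fin m ⊕ (Fin k ⊕ Bool)) with hι
  set A' : ι → Fin (n + k) → ℚ := fun p => match p with
    | Sum.inl i => Fin.append (F i) (fun l => -(∑ j, F i j * δ l j))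
    | Sum.inr (Sum.inl l) => Fin.append 0 (fun l' => if l' = l then 1 else 0)
    | Sum.inr (Sum.inr true) => Fin.append 0 (fun _ => 1)
    | Sum.inr (Sum.inr false) => Fin.append 0 (fun _ => -1) with hA'
  set b' : ι → ℚ := fun p => match p with
    | Sum.inl _ => 0
    | Sum.inr (Sum.inl _) => 0
    | Sum.inr (Sum.inr true) => 1
    | Sum.inr (Sum.inr false) => -1 with hb'
  have hbig : QPoly {z : Fin (n + k) → ℝ | ∀ p, (b' p : ℝ) ≤ ∑ j, (A' p j : ℝ) * z j} :=
    qpoly_of_fintype ι A' b'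
  have hproj := hbig.projMulti
  have split : ∀ (u : Fin n → ℚ) (v : Fin k → ℚ) (x : Fin n → ℝ) (y : Fin k → ℝ),
      (∑ j, ((Fin.append u v j : ℚ) : ℝ) * (Fin.append x y) j)
        = (∑ j, (u j : ℝ) * x j) + ∑ l, (v l : ℝ) * y l := by
    intro u v x y
    rw [Fin.sum_univ_add]
    simp [Fin.append_left, Fin.append_right]
  have key : (convexHull ℝ (Set.range d) +
        {x : Fin n → ℝ | ∀ i, 0 ≤ ∑ j, (F i j : ℝ) * x j})
      = {x : Fin n → ℝ | ∃ y : Fin k → ℝ, Fin.append x y ∈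
          {z : Fin (n + k) → ℝ | ∀ p, (b' p : ℝ) ≤ ∑ j, (A' p j : ℝ) * z j}} := by
    ext x
    rw [Set.mem_add]
    constructor
    · rintro ⟨p, hp, c, hc, rfl⟩
      obtain ⟨w, hw0, hw1, hwp⟩ := (mem_convexHull_range_iff d p).mp hp
      refine ⟨w, ?_⟩
      rintro (i | l | b)
      · simp only [hA', hb']
        rw [split]
        push_cast
        simp only [← hd]
        rw [row_algebra (fun j => (F i j : ℝ)) d w (p + c)]
        have hpc : ∀ j, (p + c) j - ∑ l, w l * d l j = c j := by
          intro j
          rw [← hwp]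
          simp [Finset.sum_apply, mul_comm]
        simp_rw [hpc]
        exact hc i
      · simp only [hA', hb']
        rw [split]
        simp only [Pi.zero_apply, Rat.cast_zero, zero_mul, Finset.sum_const_zero, zero_add]
        have : ∑ l', ((if l' = l then (1:ℚ) else 0 : ℚ) : ℝ) * w l' = w l := by
          rw [Finset.sum_eq_single l]
          · simp
          · intro b _ hb; simp [hb]
          · intro h; exact absurd (Finset.mem_univ l) h
        rw [this]
        exact hw0 l
      · cases b
        · simp only [hA', hb']
          rw [split]
          push_cast
          simp [hw1]
        · simp only [hA', hb']
          rw [split]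
          push_cast
          simp [hw1]
    · rintro ⟨y, hy⟩
      have hpos : ∀ l, 0 ≤ y l := by
        intro l
        have h0 := hy (Sum.inr (Sum.inl l))
        simp only [hA', hb'] at h0
        rw [split] at h0
        have heq : ∑ l', ((if l' = l then (1:ℚ) else 0 : ℚ) : ℝ) * y l' = y l := by
          rw [Finset.sum_eq_single l]
          · simp
          · intro b _ hb; simp [hb]
          · intro h; exact absurd (Finset.mem_univ l) h
        rw [heq] at h0
        simpa using h0
      have hsum1 : ∑ l, y l = 1 := by
        have h1 := hy (Sum.inr (Sum.inr true))
        have h2 := hy (Sum.inr (Sum.inr false))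
        simp only [hA', hb'] at h1 h2
        rw [split] at h1
        rw [split] at h2
        push_cast at h1 h2
        simp only [Pi.zero_apply, Rat.cast_zero, zero_mul, Finset.sum_const_zero, zero_add, one_mul, neg_mul,
          Finset.sum_neg_distrib] at h1 h2
        linarith
      refine ⟨∑ l, y l • d l, (mem_convexHull_range_iff d _).mpr ⟨y, hpos, hsum1, rfl⟩,
        x - ∑ l, y l • d l, ?_, by abel⟩
      intro i
      have h0 := hy (Sum.inl i)
      simp only [hA', hb'] at h0
      rw [split] at h0
      push_cast at h0
      simp only [← hd] at h0
      rw [row_algebra (fun j => (F i j : ℝ)) d y x] at h0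
      have hxy : ∀ j, (x - ∑ l, y l • d l) j = x j - ∑ l, y l * d l j := by
        intro j; simp [Finset.sum_apply]
      simp_rw [hxy]
      simpa using h0
  rw [key]
  exact hproj

section ConeProps

variable {n m : ℕ} (F : Fin m → Fin n → ℚ)

/-- The cone defined by a rational matrix. -/
def coneOf : Set (Fin n → ℝ) := {x | ∀ i, 0 ≤ ∑ j, (F i j : ℝ) * x j}

theorem rowsum_add (a : Fin n → ℚ) (x y : Fin n → ℝ) :
    (∑ j, (a j : ℝ) * (x + y) j) = (∑ j, (a j : ℝ) * x j) + ∑ j, (a j : ℝ) * y j := by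
  rw [← Finset.sum_add_distrib]
  exact Finset.sum_congr rfl fun j _ => by simp [mul_add]

theorem rowsum_sub (a : Fin n → ℚ) (x y : Fin n → ℝ) :
    (∑ j, (a j : ℝ) * (x - y) j) = (∑ j, (a j : ℝ) * x j) - ∑ j, (a j : ℝ) * y j := by
  rw [← Finset.sum_sub_distrib]
  exact Finset.sum_congr rfl fun j _ => by simp [mul_sub]

theorem rowsum_smul (a : Fin n → ℚ) (r : ℝ) (x : Fin n → ℝ) :
    (∑ j, (a j : ℝ) * (r • x) j) = r * ∑ j, (a j : ℝ) * x j := by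
  rw [Finset.mul_sum]
  exact Finset.sum_congr rfl fun j _ => by simp [Pi.smul_apply, smul_eq_mul]; ring

theorem coneOf_convex : Convex ℝ (coneOf F) := by
  intro x hx y hy a b ha hb hab i
  have hx' := hx i
  have hy' := hy i
  simp only [coneOf, Set.mem_setOf_eq] at *
  rw [rowsum_add, rowsum_smul, rowsum_smul]
  positivity

theorem coneOf_add_subset : coneOf F + coneOf F ⊆ coneOf F := by
  rintro z ⟨x, hx, y, hy, rfl⟩ i
  have := add_nonneg (hx i) (hy i)
  rwa [← rowsum_add] at this

theorem coneOf_closed : IsClosed (coneOf F) := by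
  have : coneOf F = ⋂ i, {x : Fin n → ℝ | 0 ≤ ∑ j, (F i j : ℝ) * x j} := by
    ext x; simp [coneOf, Set.mem_iInter]
  rw [this]
  refine isClosed_iInter fun i => isClosed_le continuous_const ?_
  exact continuous_finset_sum _ fun j _ => continuous_const.mul (continuous_apply j)

end ConeProps

theorem main_aux {n L m : ℕ} (hL : 0 < L) (F : Fin m → Fin n → ℚ)
    (D : Set (Fin n → ℝ)) (hDC : D ⊆ coneOf F)
    (hDlat : ∀ x ∈ D, ∀ j, ∃ z : ℤ, x j = (z : ℝ) / (L : ℝ)) :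
    ∃ D' ⊆ D, D'.Finite ∧
      convexHull ℝ D + coneOf F = convexHull ℝ D' + coneOf F ∧
      QPoly (convexHull ℝ D' + coneOf F) ∧
      IsClosed (convexHull ℝ D' + coneOf F) := by
  classical
  have hLR : (0 : ℝ) < (L : ℝ) := by exact_mod_cast hL
  -- integer coordinates
  set ζ : (Fin n → ℝ) → Fin n → ℤ := fun x j =>
    if h : ∃ z : ℤ, x j = (z : ℝ) / (L : ℝ) then h.choose else 0 with hζdef
  have hζ : ∀ x ∈ D, ∀ j, ((ζ x j : ℤ) : ℝ) = (L : ℝ) * x j := by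
    intro x hx j
    have h : ∃ z : ℤ, x j = (z : ℝ) / (L : ℝ) := hDlat x hx j
    rw [hζdef]
    simp only [dif_pos h]
    set z := h.choose with hzd
    have hz : x j = (z : ℝ) / (L : ℝ) := h.choose_spec
    rw [hz]
    field_simp
  -- integer scaled rows
  set N : Fin m → ℕ := fun i => ∏ j, (F i j).den with hNdef
  have hNpos : ∀ i, 0 < N i := fun i => Finset.prod_pos fun j _ => (F i j).den_pos
  set c : Fin m → Fin n → ℤ := fun i j =>
    (F i j).num * ∏ j' ∈ Finset.univ.erase j, ((F i j').den : ℤ) with hcdef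
  have hcq : ∀ i j, ((c i j : ℤ) : ℚ) = (N i : ℚ) * F i j := by
    intro i j
    have hden : ((F i j).den : ℚ) ≠ 0 := by
      exact_mod_cast (F i j).den_ne_zero
    have hnum : F i j * ((F i j).den : ℚ) = ((F i j).num : ℚ) :=
      (eq_div_iff hden).mp (Rat.num_div_den (F i j)).symm
    have hN : (N i : ℚ) = ((F i j).den : ℚ) * ∏ j' ∈ Finset.univ.erase j, ((F i j').den : ℚ) := by
      rw [hNdef]
      push_cast
      rw [← Finset.mul_prod_erase _ _ (Finset.mem_univ j)]
    rw [hN, hcdef]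
    push_cast
    rw [← hnum]
    ring
  have hcR : ∀ i j, ((c i j : ℤ) : ℝ) = (N i : ℝ) * (F i j : ℝ) := by
    intro i j
    have := hcq i j
    have h2 : (((c i j : ℤ) : ℚ) : ℝ) = (((N i : ℚ) * F i j : ℚ) : ℝ) := by rw [this]
    push_cast at h2 ⊢
    exact h2
  -- the integer linear functional values
  set φraw : (Fin n → ℝ) → Fin m → ℤ := fun x i => ∑ j, c i j * ζ x j with hφrawdef
  have hφR : ∀ x ∈ D, ∀ i,
      ((φraw x i : ℤ) : ℝ) = (N i : ℝ) * (L : ℝ) * ∑ j, (F i j : ℝ) * x j := by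
    intro x hx i
    rw [hφrawdef]
    push_cast
    rw [Finset.mul_sum]
    refine Finset.sum_congr rfl fun j _ => ?_
    rw [hcR i j]
    have := hζ x hx j
    push_cast at this
    rw [this]
    ring
  have hφnn : ∀ x ∈ D, ∀ i, 0 ≤ φraw x i := by
    intro x hx i
    have h1 : (0:ℝ) ≤ ((φraw x i : ℤ) : ℝ) := by
      rw [hφR x hx i]
      have := hDC hx i
      positivity
    exact_mod_cast h1
  set φ : (Fin n → ℝ) → Fin m → ℕ := fun x i => (φraw x i).toNat with hφdef
  have hφle : ∀ x ∈ D, ∀ y ∈ D, φ x ≤ φ y → ∀ i,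
      (∑ j, (F i j : ℝ) * x j) ≤ ∑ j, (F i j : ℝ) * y j := by
    intro x hx y hy hle i
    have h1 : φraw x i ≤ φraw y i := by
      have hx0 := hφnn x hx i
      have hy0 := hφnn y hy i
      have := hle i
      simp only [hφdef] at this
      omega
    have h2 : ((φraw x i : ℤ) : ℝ) ≤ ((φraw y i : ℤ) : ℝ) := by exact_mod_cast h1
    rw [hφR x hx i, hφR y hy i] at h2
    have hpos : (0:ℝ) < (N i : ℝ) * (L : ℝ) := by
      have := hNpos i
      positivity
    exact le_of_mul_le_mul_left (by linarith [h2]) hpos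
  -- Dickson domination
  obtain ⟨D', hD'sub, hD'fin, hdom⟩ := exists_finite_dominating_map D φ
  have hDsub : D ⊆ D' + coneOf F := by
    intro x hx
    obtain ⟨t, htD', hφt⟩ := hdom x hx
    refine Set.mem_add.mpr ⟨t, htD', x - t, ?_, by abel⟩
    intro i
    have := hφle t (hD'sub htD') x hx hφt i
    rw [rowsum_sub]
    linarith
  -- set equality
  have heq : convexHull ℝ D + coneOf F = convexHull ℝ D' + coneOf F := by
    apply Set.Subset.antisymm
    · have h1 : convexHull ℝ D ⊆ convexHull ℝ D' + coneOf F := by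
        have h2 : D ⊆ convexHull ℝ D' + coneOf F :=
          hDsub.trans (Set.add_subset_add_right (subset_convexHull ℝ D'))
        have h3 : Convex ℝ (convexHull ℝ D' + coneOf F) :=
          (convex_convexHull ℝ D').add (coneOf_convex F)
        exact convexHull_min h2 h3
      calc convexHull ℝ D + coneOf F
          ⊆ (convexHull ℝ D' + coneOf F) + coneOf F := Set.add_subset_add_right h1
        _ = convexHull ℝ D' + (coneOf F + coneOf F) := add_assoc _ _ _
        _ ⊆ convexHull ℝ D' + coneOf F := Set.add_subset_add_left (coneOf_add_subset F)
    · exact Set.add_subset_add_right (convexHull_mono hD'sub)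
  -- enumerate D'
  obtain ⟨k, d, -, hrange⟩ := hD'fin.fin_param
  have hdD : ∀ l, d l ∈ D := fun l => hD'sub (hrange ▸ Set.mem_range_self l)
  set δ : Fin k → Fin n → ℚ := fun l j =>
    ((hDlat (d l) (hdD l) j).choose : ℚ) / (L : ℚ) with hδdef
  have hdδ : ∀ l j, d l j = ((δ l j : ℚ) : ℝ) := by
    intro l j
    rw [hδdef]
    push_cast
    exact (hDlat (d l) (hdD l) j).choose_spec
  have hQ : QPoly (convexHull ℝ D' + coneOf F) := by
    rw [← hrange]
    exact qpoly_hull_add_cone F δ d hdδ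
  have hclosed : IsClosed (convexHull ℝ D' + coneOf F) := by
    have hcpt : IsCompact (convexHull ℝ D') := by
      rw [← hrange]
      exact (Set.finite_range d).isCompact_convexHull ℝ
    exact (coneOf_closed F).add_left_of_isCompact hcpt
  exact ⟨D', hD'sub, hD'fin, heq, hQ, hclosed⟩

theorem QPoly.isRationalPolyhedron {n : ℕ} {S : Set (Fin n → ℝ)} (h : QPoly S) :
    IsRationalPolyhedron S := by
  classical
  obtain ⟨m, A, b, rfl⟩ := h
  refine ⟨m, fun i => ∑ j, (A i j : ℝ) • (LinearMap.proj j : (Fin n → ℝ) →ₗ[ℝ] ℝ), b, ?_, ?_⟩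
  · intro i j
    refine ⟨A i j, ?_⟩
    simp [LinearMap.sum_apply, Pi.single_apply, mul_ite, Finset.sum_ite_eq']
  · ext x
    simp [LinearMap.sum_apply]

theorem IsRationalPolyhedralCone.exists_matrix {n : ℕ} {C : Set (Fin n → ℝ)}
    (hC : IsRationalPolyhedralCone C) :
    ∃ (m : ℕ) (F : Fin m → Fin n → ℚ), C = coneOf F := by
  classical
  obtain ⟨m, f, hfq, hCeq⟩ := hC
  choose F hF using hfq
  refine ⟨m, F, ?_⟩
  have hfF : ∀ i x, f i x = ∑ j, (F i j : ℝ) * x j := by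
    intro i x
    rw [LinearMap.pi_apply_eq_sum_univ (f i) x]
    refine Finset.sum_congr rfl fun j _ => ?_
    have hsingle : (fun j' => if j = j' then (1:ℝ) else 0) = Pi.single j 1 := by
      funext j'
      rw [Pi.single_apply]
      simp [eq_comm]
    rw [hsingle, hF i j, smul_eq_mul, mul_comm]
  rw [hCeq]
  ext x
  simp [coneOf, hfF]

/-- If `C ⊆ ℝⁿ` is a rational polyhedral cone and `D ⊆ C ∩ ((1/L)·ℤ)ⁿ`, then
`conv(C + D) = conv(D) + C`, this set is closed, it equals `conv(D') + C` for some finite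
`D' ⊆ D`, and in particular it is a closed rational polyhedron. -/
theorem convexHull_lattice_plus_cone_polyhedron {n L : ℕ} (hL : 0 < L)
    (C D : Set (Fin n → ℝ)) (hC : IsRationalPolyhedralCone C) (hDC : D ⊆ C)
    (hDlat : ∀ x ∈ D, ∀ j, ∃ z : ℤ, x j = (z : ℝ) / (L : ℝ)) :
    convexHull ℝ (C + D) = convexHull ℝ D + C ∧
    IsClosed (convexHull ℝ (C + D)) ∧
    (∃ D' ⊆ D, D'.Finite ∧ convexHull ℝ (C + D) = convexHull ℝ D' + C) ∧
    IsRationalPolyhedron (convexHull ℝ (C + D)) := by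
  obtain ⟨m, F, rfl⟩ := hC.exists_matrix
  have h1 : convexHull ℝ (coneOf F + D) = convexHull ℝ D + coneOf F := by
    rw [convexHull_add, (coneOf_convex F).convexHull_eq, add_comm]
  obtain ⟨D', hD'sub, hD'fin, heq, hQ, hclosed⟩ := main_aux hL F D hDC hDlat
  refine ⟨h1, ?_, ⟨D', hD'sub, hD'fin, ?_⟩, ?_⟩
  · rw [h1, heq]; exact hclosed
  · rw [h1, heq]
  · rw [h1, heq]; exact hQ.isRationalPolyhedron

end SclPaper
end
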